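/- arXiv:1806.05749 — 2 statements merged into one kernel-verified Lean document; each statement's English description precedes it below -/
import Mathlib

section
/- Theorem 1(a): Let θ_i* ∈ ℝ^m and let (θ_i^k) be generated by θ_i^{k+1} = P_{θ_i^k}^{k+1}(η·∇ℓ(θ_i^k)) with loss ℓ(θ) = (1/2)‖y_i^{k+1} − ⟨ξ_i^k, θ⟩‖² where y_i^{k+1} = ⟨ξ_i^k, θ_i*⟩ (noise-free). Suppose ‖ξ_i^k‖_*² ≤ c_s for all k and the fixed step-size η satisfies η − (η²/(2ν))c_s > ε for some ε > 0, where ν is the strong convexity modulus of the distance-generating function. Then V_k(θ_i*) := V(θ_i^k, θ_i*) is nonincreasing (hence converges) and lim_{k→∞} ‖⟨ξ_i^k, θ_i* − θ_i^k⟩‖² = 0. -/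
/-!
The prox step is characterised by its first-order optimality condition; combined with the
three-point identity of the Bregman divergence and the Young-type bound
`a ⟪ξ, x - w⟫ ≤ a² ‖ξ‖_*² / (2ν) + V(x, w)` it gives the mirror-descent inequality
`V(θ^{k+1}, θ*) ≤ V(θ^k, θ*) + ⟪g, θ* - θ^k⟫ + ‖g‖_*² / (2ν)`.
For the noise-free gradient `g = -η e_k ξ_k`, `e_k = ⟪ξ_k, θ* - θ^k⟫`, the step-size condition turns
this into `V_{k+1} + ε e_k² ≤ V_k`. Hence `V_k` is nonincreasing and, being nonnegative, converges,
and `e_k² ≤ (V_k - V_{k+1}) / ε → 0`.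

Since the primal "norm" `N` is not assumed homogeneous, the Young-type bound cannot rescale
`w - x`; instead Rolle's theorem provides a point `z` of the segment `[x, w]` at which
`⟪z - x, Dβ z - Dβ x⟫ = 2 t² V(x, w)` with `z - x = t (w - x)`, and strong monotonicity is applied
at `z`.
-/

open RealInnerProductSpace Filter Topology Set

variable {E : Type*} [NormedAddCommGroup E] [InnerProductSpace ℝ E]

def bregmanDiv (β : E → ℝ) (Dβ : E → E) (x y : E) : ℝ :=
  β y - β x - ⟪Dβ x, y - x⟫

section Bregman

variable {β : E → ℝ} {Dβ : E → E}

theorem bregmanDiv_three_point (x w u : E) :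
    bregmanDiv β Dβ w u
      = bregmanDiv β Dβ x u - bregmanDiv β Dβ x w + ⟪Dβ x - Dβ w, u - w⟫ := by
  simp only [bregmanDiv, inner_sub_left, inner_sub_right]
  ring

theorem mul_inner_le_of_strongly_monotone {T : Set E} {N Ns : E → ℝ} {ν : ℝ} (hν : 0 < ν)
    (hpair : ∀ v u, ⟪v, u⟫ ≤ Ns v * N u)
    (hstrong : ∀ θ ∈ T, ∀ θ' ∈ T, ν * N (θ' - θ) ^ 2 ≤ ⟪θ' - θ, Dβ θ' - Dβ θ⟫)
    {x z : E} (hx : x ∈ T) (hz : z ∈ T) (a : ℝ) (ξ : E) :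
    a * ⟪ξ, x - z⟫ ≤ a ^ 2 * Ns ξ ^ 2 / (2 * ν) + ⟪z - x, Dβ z - Dβ x⟫ / 2 := by
  obtain ⟨b, q, hb, hbound, hq⟩ : ∃ b q : ℝ, b ^ 2 = a ^ 2 ∧ a * ⟪ξ, x - z⟫ ≤ b * Ns ξ * q ∧
      ν * q ^ 2 ≤ ⟪z - x, Dβ z - Dβ x⟫ := by
    rcases le_or_gt 0 a with ha | ha
    · refine ⟨a, N (x - z), rfl, ?_, ?_⟩
      · simpa [mul_assoc] using mul_le_mul_of_nonneg_left (hpair ξ (x - z)) ha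
      · simpa only [← neg_sub x z, ← neg_sub (Dβ x) (Dβ z), inner_neg_neg]
          using hstrong z hz x hx
    · refine ⟨-a, N (z - x), neg_sq a, ?_, hstrong x hx z hz⟩
      have := mul_le_mul_of_nonneg_left (hpair ξ (z - x)) (neg_nonneg.mpr ha.le)
      rw [← neg_sub x z, inner_neg_right, neg_sub] at this
      linarith
  have hyoung : 2 * ν * (b * Ns ξ * q) ≤ a ^ 2 * Ns ξ ^ 2 + ν * (ν * q ^ 2) := by
    nlinarith [sq_nonneg (b * Ns ξ - ν * q)]
  rw [div_add_div _ _ (by positivity) two_ne_zero, le_div_iff₀ (by positivity)]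
  nlinarith

variable [CompleteSpace E]

theorem HasGradientAt.hasDerivAt_comp_add_smul {f : E → ℝ} {g x v : E} {t : ℝ}
    (h : HasGradientAt f g (x + t • v)) :
    HasDerivAt (fun s : ℝ => f (x + s • v)) ⟪g, v⟫ t := by
  have hline : HasDerivAt (fun s : ℝ => x + s • v) v t := by
    simpa using ((hasDerivAt_id t).smul_const v).const_add x
  have := h.hasFDerivAt.comp_hasDerivAt t hline
  simpa only [Function.comp_def, InnerProductSpace.toDual_apply_apply] using this

theorem exists_inner_sub_eq_bregmanDiv {T : Set E} (hT : Convex ℝ T)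
    (hgrad : ∀ θ ∈ T, HasGradientAt β (Dβ θ) θ) {x w : E} (hx : x ∈ T) (hw : w ∈ T) :
    ∃ t ∈ Ioo (0 : ℝ) 1,
      ⟪t • (w - x), Dβ (x + t • (w - x)) - Dβ x⟫ = 2 * t ^ 2 * bregmanDiv β Dβ x w := by
  set V := bregmanDiv β Dβ x w
  -- the linear and quadratic corrections make `φ 0 = φ 1 = β x`, so Rolle's theorem applies
  set φ : ℝ → ℝ := fun τ => β (x + τ • (w - x)) - τ * ⟪Dβ x, w - x⟫ - V * τ ^ 2
  have hφ : ∀ τ ∈ Icc (0 : ℝ) 1, HasDerivAt φ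
      (⟪Dβ (x + τ • (w - x)), w - x⟫ - ⟪Dβ x, w - x⟫ - V * (2 * τ)) τ := fun τ hτ => by
    refine (((hgrad _ (hT.add_smul_sub_mem hx hw hτ)).hasDerivAt_comp_add_smul).sub
      (hasDerivAt_mul_const _)).sub ?_
    simpa using (hasDerivAt_pow 2 τ).const_mul V
  have hφ01 : φ 0 = φ 1 := by
    simp only [φ, V, bregmanDiv]
    simp
  obtain ⟨t, ht, hφt⟩ := exists_hasDerivAt_eq_zero zero_lt_one
    (fun τ hτ => (hφ τ hτ).continuousAt.continuousWithinAt) hφ01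
    (fun τ hτ => hφ τ (Ioo_subset_Icc_self hτ))
  refine ⟨t, ht, ?_⟩
  rw [real_inner_smul_left, inner_sub_right, real_inner_comm (Dβ _) (w - x),
    real_inner_comm (Dβ x) (w - x)]
  linear_combination t * hφt

theorem bregmanDiv_nonneg {T : Set E} (hT : Convex ℝ T)
    (hgrad : ∀ θ ∈ T, HasGradientAt β (Dβ θ) θ) {ν : ℝ} (hν : 0 ≤ ν) {N : E → ℝ}
    (hstrong : ∀ θ ∈ T, ∀ θ' ∈ T, ν * N (θ' - θ) ^ 2 ≤ ⟪θ' - θ, Dβ θ' - Dβ θ⟫)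
    {x w : E} (hx : x ∈ T) (hw : w ∈ T) : 0 ≤ bregmanDiv β Dβ x w := by
  obtain ⟨t, ht, heq⟩ := exists_inner_sub_eq_bregmanDiv hT hgrad hx hw
  have := hstrong x hx _ (hT.add_smul_sub_mem hx hw (Ioo_subset_Icc_self ht))
  rw [add_sub_cancel_left, heq] at this
  have ht0 : 0 < 2 * t ^ 2 := by have := ht.1; positivity
  exact (mul_nonneg_iff_of_pos_left ht0).mp (le_trans (by positivity) this)

theorem mul_inner_le_bregmanDiv {T : Set E} (hT : Convex ℝ T)
    (hgrad : ∀ θ ∈ T, HasGradientAt β (Dβ θ) θ) {ν : ℝ} (hν : 0 < ν) {N Ns : E → ℝ}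
    (hpair : ∀ v u, ⟪v, u⟫ ≤ Ns v * N u)
    (hstrong : ∀ θ ∈ T, ∀ θ' ∈ T, ν * N (θ' - θ) ^ 2 ≤ ⟪θ' - θ, Dβ θ' - Dβ θ⟫)
    {x w : E} (hx : x ∈ T) (hw : w ∈ T) (a : ℝ) (ξ : E) :
    a * ⟪ξ, x - w⟫ ≤ a ^ 2 * Ns ξ ^ 2 / (2 * ν) + bregmanDiv β Dβ x w := by
  obtain ⟨t, ht, heq⟩ := exists_inner_sub_eq_bregmanDiv hT hgrad hx hw
  -- the factor `t` of `z - x = t • (w - x)` is absorbed by the multiplier `a * t`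
  have hz := hT.add_smul_sub_mem hx hw (Ioo_subset_Icc_self ht)
  have key := mul_inner_le_of_strongly_monotone hν hpair hstrong hx hz (a * t) ξ
  rw [add_sub_cancel_left, heq, show x - (x + t • (w - x)) = t • (x - w) by module,
    real_inner_smul_right] at key
  have ht2 : 0 < t ^ 2 := pow_pos ht.1 2
  refine le_of_mul_le_mul_left ?_ ht2
  calc t ^ 2 * (a * ⟪ξ, x - w⟫) = a * t * (t * ⟪ξ, x - w⟫) := by ring
    _ ≤ (a * t) ^ 2 * Ns ξ ^ 2 / (2 * ν) + 2 * t ^ 2 * bregmanDiv β Dβ x w / 2 := key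
    _ = t ^ 2 * (a ^ 2 * Ns ξ ^ 2 / (2 * ν) + bregmanDiv β Dβ x w) := by ring

theorem inner_sub_le_of_isMinOn_bregman_prox {S : Set E} (hS : Convex ℝ S) {g x w : E}
    (hw : w ∈ S) (hβ : HasGradientAt β (Dβ w) w)
    (hmin : IsMinOn (fun θ => ⟪g, θ - x⟫ + bregmanDiv β Dβ x θ) S w) {u : E} (hu : u ∈ S) :
    ⟪Dβ x - Dβ w, u - w⟫ ≤ ⟪g, u - w⟫ := by
  have hf : HasFDerivAt (fun θ => ⟪g, θ - x⟫ + bregmanDiv β Dβ x θ)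
      (innerSL ℝ (g - Dβ x) + InnerProductSpace.toDual ℝ E (Dβ w)) w := by
    have hlin : HasFDerivAt (fun θ => ⟪g - Dβ x, θ⟫) (innerSL ℝ (g - Dβ x)) w :=
      (innerSL ℝ (g - Dβ x)).hasFDerivAt
    have hobj : (fun θ => ⟪g, θ - x⟫ + bregmanDiv β Dβ x θ)
        = fun θ => ⟪g - Dβ x, θ⟫ + β θ - (⟪g - Dβ x, x⟫ + β x) := by
      funext θ
      simp only [bregmanDiv, inner_sub_left, inner_sub_right]
      ring
    rw [hobj]
    exact (hlin.add hβ.hasFDerivAt).sub_const _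
  have := hmin.localize.hasFDerivWithinAt_nonneg hf.hasFDerivWithinAt
    (sub_mem_posTangentConeAt_of_segment_subset (hS.segment_subset hw hu))
  simp only [add_apply, innerSL_apply_apply,
    InnerProductSpace.toDual_apply_apply, inner_sub_left] at this
  rw [inner_sub_left]
  linarith

theorem bregmanDiv_prox_le {S T : Set E} (hST : S ⊆ T) (hS : Convex ℝ S) (hT : Convex ℝ T)
    (hgrad : ∀ θ ∈ T, HasGradientAt β (Dβ θ) θ) {ν : ℝ} (hν : 0 < ν) {N Ns : E → ℝ}
    (hpair : ∀ v u, ⟪v, u⟫ ≤ Ns v * N u)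
    (hstrong : ∀ θ ∈ T, ∀ θ' ∈ T, ν * N (θ' - θ) ^ 2 ≤ ⟪θ' - θ, Dβ θ' - Dβ θ⟫)
    {x w u : E} (hx : x ∈ T) (hw : w ∈ S) (hu : u ∈ S) (a : ℝ) (ξ : E)
    (hmin : IsMinOn (fun θ => ⟪a • ξ, θ - x⟫ + bregmanDiv β Dβ x θ) S w) :
    bregmanDiv β Dβ w u
      ≤ bregmanDiv β Dβ x u + a * ⟪ξ, u - x⟫ + a ^ 2 * Ns ξ ^ 2 / (2 * ν) := by
  have hopt := inner_sub_le_of_isMinOn_bregman_prox hS hw (hgrad w (hST hw)) hmin hu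
  have hyoung := mul_inner_le_bregmanDiv hT hgrad hν hpair hstrong hx (hST hw) a ξ
  have hsplit : ⟪a • ξ, u - w⟫ = a * ⟪ξ, u - x⟫ + a * ⟪ξ, x - w⟫ := by
    rw [real_inner_smul_left, ← mul_add, ← inner_add_right, sub_add_sub_cancel]
  rw [bregmanDiv_three_point x w u]
  linarith

end Bregman

theorem exists_tendsto_and_tendsto_zero_of_add_mul_le {v e : ℕ → ℝ} {ε : ℝ} (hε : 0 < ε)
    (hv : ∀ k, 0 ≤ v k) (he : ∀ k, 0 ≤ e k) (hdesc : ∀ k, v (k + 1) + ε * e k ≤ v k) :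
    (∃ L, Tendsto v atTop (𝓝 L)) ∧ Tendsto e atTop (𝓝 0) := by
  have hanti : Antitone v :=
    antitone_nat_of_succ_le fun k => by linarith [hdesc k, mul_nonneg hε.le (he k)]
  have hlim : Tendsto v atTop (𝓝 (⨅ k, v k)) :=
    tendsto_atTop_ciInf hanti ⟨0, by rintro _ ⟨k, rfl⟩; exact hv k⟩
  refine ⟨⟨_, hlim⟩, squeeze_zero (g := fun k => (v k - v (k + 1)) / ε) he (fun k => ?_) ?_⟩
  · rw [le_div_iff₀ hε]
    linarith [hdesc k]
  · simpa using (hlim.sub (hlim.comp (tendsto_add_atTop_nat 1))).div_const ε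

theorem utility_learning_noise_free_general (m : ℕ)
    (Θ : ℕ → Set (EuclideanSpace ℝ (Fin m)))
    (hconv : ∀ k, Convex ℝ (Θ k)) (hnested : ∀ k, Θ (k + 1) ⊆ Θ k)
    (β : EuclideanSpace ℝ (Fin m) → ℝ)
    (Dβ : EuclideanSpace ℝ (Fin m) → EuclideanSpace ℝ (Fin m))
    (hgrad : ∀ θ ∈ Θ 0, HasGradientAt β (Dβ θ) θ)
    (ν : ℝ) (hν : 0 < ν)
    (N Ns : EuclideanSpace ℝ (Fin m) → ℝ)
    (hpair : ∀ v u, ⟪v, u⟫ ≤ Ns v * N u)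
    (hstrong : ∀ θ ∈ Θ 0, ∀ θ' ∈ Θ 0, ν * N (θ' - θ) ^ 2 ≤ ⟪θ' - θ, Dβ θ' - Dβ θ⟫)
    (V : EuclideanSpace ℝ (Fin m) → EuclideanSpace ℝ (Fin m) → ℝ)
    (hV : ∀ θ₁ θ₂, V θ₁ θ₂ = β θ₂ - β θ₁ - ⟪Dβ θ₁, θ₂ - θ₁⟫)
    (θstar : EuclideanSpace ℝ (Fin m)) (hθstar : ∀ k, θstar ∈ Θ k)
    (ξ : ℕ → EuclideanSpace ℝ (Fin m))
    (c_s : ℝ) (hstable : ∀ k, (Ns (ξ k)) ^ 2 ≤ c_s)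
    (η ε : ℝ) (hε : 0 < ε) (hstep : η - (η ^ 2 / (2 * ν)) * c_s > ε)
    (θseq : ℕ → EuclideanSpace ℝ (Fin m)) (hθ0 : θseq 0 ∈ Θ 0)
    (hmem : ∀ k, θseq (k + 1) ∈ Θ (k + 1))
    -- the update is the prox-mapping of the scaled loss gradient
    (hupdate : ∀ k, ∀ θ' ∈ Θ (k + 1),
      ⟪η • ((⟪ξ k, θseq k⟫ - ⟪ξ k, θstar⟫) • ξ k), θseq (k + 1) - θseq k⟫
          + V (θseq k) (θseq (k + 1))
        ≤ ⟪η • ((⟪ξ k, θseq k⟫ - ⟪ξ k, θstar⟫) • ξ k), θ' - θseq k⟫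
          + V (θseq k) θ') :
    (∀ k, V (θseq (k + 1)) θstar ≤ V (θseq k) θstar) ∧
      (∃ L : ℝ, Tendsto (fun k => V (θseq k) θstar) atTop (nhds L)) ∧
      Tendsto (fun k => (⟪ξ k, θstar - θseq k⟫) ^ 2) atTop (nhds 0) := by
  obtain rfl : V = bregmanDiv β Dβ := funext₂ hV
  have hΘ : ∀ k, Θ k ⊆ Θ 0 := fun k => antitone_nat_of_succ_le hnested (Nat.zero_le k)
  have hθ : ∀ k, θseq k ∈ Θ 0
    | 0 => hθ0
    | k + 1 => hΘ _ (hmem k)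
  have hdesc : ∀ k, bregmanDiv β Dβ (θseq (k + 1)) θstar + ε * ⟪ξ k, θstar - θseq k⟫ ^ 2
      ≤ bregmanDiv β Dβ (θseq k) θstar := by
    intro k
    set e := ⟪ξ k, θstar - θseq k⟫
    have hmin : IsMinOn (fun θ => ⟪(η * -e) • ξ k, θ - θseq k⟫ + bregmanDiv β Dβ (θseq k) θ)
        (Θ (k + 1)) (θseq (k + 1)) := by
      have hs : ⟪ξ k, θseq k⟫ - ⟪ξ k, θstar⟫ = -e := by simp only [e, inner_sub_right]; ring
      simpa only [isMinOn_iff, hs, smul_smul] using hupdate k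
    have hprox := bregmanDiv_prox_le (hΘ (k + 1)) (hconv (k + 1)) (hconv 0) hgrad hν hpair
      hstrong (hθ k) (hmem k) (hθstar (k + 1)) _ _ hmin
    have hNs : η ^ 2 * e ^ 2 / (2 * ν) * Ns (ξ k) ^ 2 ≤ η ^ 2 * e ^ 2 / (2 * ν) * c_s :=
      mul_le_mul_of_nonneg_left (hstable k) (by positivity)
    linear_combination hprox + hNs + mul_le_mul_of_nonneg_right hstep.le (sq_nonneg e)
  obtain ⟨hlim, hzero⟩ := exists_tendsto_and_tendsto_zero_of_add_mul_le hε
    (fun k => bregmanDiv_nonneg (hconv 0) hgrad hν.le hstrong (hθ k) (hθstar 0))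
    (fun k => sq_nonneg _) hdesc
  exact ⟨fun k => by linarith [hdesc k, mul_nonneg hε.le (sq_nonneg ⟪ξ k, θstar - θseq k⟫)],
    hlim, hzero⟩

/-- Theorem 1(a): in the noise-free case, the utility-learning iterates
`θ^{k+1} = P^{k+1}_{θ^k}(η ∇ℓ(θ^k))` with `∇ℓ(θ^k) = (⟨ξ^k, θ^k⟩ - ⟨ξ^k, θ*⟩) ξ^k`
(prox-mapping of the ν-strongly convex distance-generating function `β`, over nested
closed convex sets `Θ k` all containing `θ*`), under the stability bound
`‖ξ^k‖_*² ≤ c_s` and step size `η - (η²/(2ν)) c_s > ε > 0`, yield a nonincreasing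
(hence convergent) Bregman divergence `V(θ^k, θ*)` and
`‖⟨ξ^k, θ* - θ^k⟩‖² → 0`. -/
theorem utility_learning_noise_free (m : ℕ)
    (Θ : ℕ → Set (EuclideanSpace ℝ (Fin m)))
    (hne : ∀ k, (Θ k).Nonempty) (hclosed : ∀ k, IsClosed (Θ k))
    (hconv : ∀ k, Convex ℝ (Θ k)) (hnested : ∀ k, Θ (k + 1) ⊆ Θ k)
    (β : EuclideanSpace ℝ (Fin m) → ℝ)
    (Dβ : EuclideanSpace ℝ (Fin m) → EuclideanSpace ℝ (Fin m))
    (hgrad : ∀ θ ∈ Θ 0, HasGradientAt β (Dβ θ) θ)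
    (hβconv : ConvexOn ℝ (Θ 0) β)
    (ν : ℝ) (hν : 0 < ν)
    (N Ns : EuclideanSpace ℝ (Fin m) → ℝ)
    (hpair : ∀ v u, ⟪v, u⟫ ≤ Ns v * N u)
    (hstrong : ∀ θ ∈ Θ 0, ∀ θ' ∈ Θ 0, ν * N (θ' - θ) ^ 2 ≤ ⟪θ' - θ, Dβ θ' - Dβ θ⟫)
    (V : EuclideanSpace ℝ (Fin m) → EuclideanSpace ℝ (Fin m) → ℝ)
    (hV : ∀ θ₁ θ₂, V θ₁ θ₂ = β θ₂ - β θ₁ - ⟪Dβ θ₁, θ₂ - θ₁⟫)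
    (θstar : EuclideanSpace ℝ (Fin m)) (hθstar : ∀ k, θstar ∈ Θ k)
    (ξ : ℕ → EuclideanSpace ℝ (Fin m))
    (c_s : ℝ) (hstable : ∀ k, (Ns (ξ k)) ^ 2 ≤ c_s)
    (η ε : ℝ) (hε : 0 < ε) (hstep : η - (η ^ 2 / (2 * ν)) * c_s > ε)
    (θseq : ℕ → EuclideanSpace ℝ (Fin m)) (hθ0 : θseq 0 ∈ Θ 0)
    (hmem : ∀ k, θseq (k + 1) ∈ Θ (k + 1))
    -- the update is the prox-mapping of the scaled loss gradient
    (hupdate : ∀ k, ∀ θ' ∈ Θ (k + 1),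
      ⟪η • ((⟪ξ k, θseq k⟫ - ⟪ξ k, θstar⟫) • ξ k), θseq (k + 1) - θseq k⟫
          + V (θseq k) (θseq (k + 1))
        ≤ ⟪η • ((⟪ξ k, θseq k⟫ - ⟪ξ k, θstar⟫) • ξ k), θ' - θseq k⟫
          + V (θseq k) θ') :
    (∀ k, V (θseq (k + 1)) θstar ≤ V (θseq k) θstar) ∧
      (∃ L : ℝ, Tendsto (fun k => V (θseq k) θstar) atTop (nhds L)) ∧
      Tendsto (fun k => (⟪ξ k, θstar - θseq k⟫) ^ 2) atTop (nhds 0) :=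
  utility_learning_noise_free_general m Θ hconv hnested β Dβ hgrad ν hν N Ns hpair hstrong V hV
    θstar hθstar ξ c_s hstable η ε hε hstep θseq hθ0 hmem hupdate
end

section
/- Theorem 1(b): Under the assumptions of Theorem 1(a) with β(θ) = (1/2)‖θ‖₂² (so ν = 1 and V(θ,θ') = (1/2)‖θ−θ'‖₂²), if additionally the regressors are persistently exciting, i.e., there exists c_p > 0 with c_p·I ≤ ξ_i^k (ξ_i^k)^T for all k, and 0 < ε < 1/(2c_p), then V_{k+1}(θ_i*) ≤ (1 − 2c_p ε) V_k(θ_i*) for all k, and hence θ_i^k → θ_i* exponentially fast: ‖θ_i^K − θ_i*‖₂² ≤ e^{−2c_p K ε}·‖θ_i^0 − θ_i*‖₂². -/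
set_option maxHeartbeats 1000000


open RealInnerProductSpace

private lemma proj_contract {m : ℕ} {K : Set (EuclideanSpace ℝ (Fin m))}
    (hK : Convex ℝ K) {u v w : EuclideanSpace ℝ (Fin m)}
    (hv : v ∈ K) (hw : w ∈ K)
    (hmin : ∀ x ∈ K, ‖u - v‖ ≤ ‖u - x‖) :
    ‖v - w‖ ^ 2 ≤ ‖u - w‖ ^ 2 := by
  letI : Nonempty K := ⟨⟨v, hv⟩⟩
  have heq : ‖u - v‖ = ⨅ x : K, ‖u - x‖ := by
    refine le_antisymm (le_ciInf fun x => hmin x x.2) ?_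
    exact ciInf_le ⟨0, fun _ ⟨_, h⟩ => h ▸ norm_nonneg _⟩ (⟨v, hv⟩ : K)
  have hvi : ⟪u - v, w - v⟫ ≤ 0 :=
    (norm_eq_iInf_iff_real_inner_le_zero hK hv).mp heq w hw
  have hdecomp : u - w = (u - v) + (v - w) := by abel
  have : ‖u - w‖ ^ 2 = ‖u - v‖ ^ 2 + 2 * ⟪u - v, v - w⟫ + ‖v - w‖ ^ 2 := by
    rw [hdecomp, @norm_add_sq_real]
  have h2 : ⟪u - v, v - w⟫ = - ⟪u - v, w - v⟫ := by
    rw [← inner_neg_right]; congr 1; abel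
  nlinarith [sq_nonneg ‖u - v‖]

/-- Theorem 1(b): with the Euclidean distance-generating function (so the update
is a Euclidean projection of the gradient step onto the nested constraint sets),
under stability `⟨ξ^k, v⟩² ≤ c_s ‖v‖²`, persistence of excitation
`c_p ‖v‖² ≤ ⟨ξ^k, v⟩²`, step size `η - (η²/2) c_s > ε` and `0 < ε < 1/(2c_p)`,
the Lyapunov function `V_k = ½‖θ^k - θ*‖²` contracts by a factor `1 - 2 c_p ε`
at each step, and `θ^k → θ*` exponentially fast. -/
theorem utility_learning_exponential (m : ℕ)
    (Θ : ℕ → Set (EuclideanSpace ℝ (Fin m)))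
    (hne : ∀ k, (Θ k).Nonempty) (hclosed : ∀ k, IsClosed (Θ k))
    (hconv : ∀ k, Convex ℝ (Θ k)) (hnested : ∀ k, Θ (k + 1) ⊆ Θ k)
    (θstar : EuclideanSpace ℝ (Fin m)) (hθstar : ∀ k, θstar ∈ Θ k)
    (ξ : ℕ → EuclideanSpace ℝ (Fin m))
    (c_s c_p : ℝ) (hcp : 0 < c_p)
    (hstable : ∀ k, ∀ v : EuclideanSpace ℝ (Fin m), (⟪ξ k, v⟫) ^ 2 ≤ c_s * ‖v‖ ^ 2)
    (hpe : ∀ k, ∀ v : EuclideanSpace ℝ (Fin m), c_p * ‖v‖ ^ 2 ≤ (⟪ξ k, v⟫) ^ 2)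
    (η ε : ℝ) (hε : 0 < ε) (hε' : ε < 1 / (2 * c_p))
    (hstep : η - (η ^ 2 / 2) * c_s > ε)
    (θseq : ℕ → EuclideanSpace ℝ (Fin m)) (hθ0 : θseq 0 ∈ Θ 0)
    (hmem : ∀ k, θseq (k + 1) ∈ Θ (k + 1))
    -- Euclidean projection of the gradient step onto `Θ (k+1)`
    (hupdate : ∀ k, ∀ θ' ∈ Θ (k + 1),
      ‖θseq k - η • ((⟪ξ k, θseq k⟫ - ⟪ξ k, θstar⟫) • ξ k) - θseq (k + 1)‖
        ≤ ‖θseq k - η • ((⟪ξ k, θseq k⟫ - ⟪ξ k, θstar⟫) • ξ k) - θ'‖) :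
    (∀ k, (1 / 2) * ‖θseq (k + 1) - θstar‖ ^ 2
        ≤ (1 - 2 * c_p * ε) * ((1 / 2) * ‖θseq k - θstar‖ ^ 2)) ∧
      (∀ K : ℕ, ‖θseq K - θstar‖ ^ 2
        ≤ Real.exp (-(2 * c_p * K * ε)) * ‖θseq 0 - θstar‖ ^ 2) := by
  have hr0 : 0 ≤ 1 - 2 * c_p * ε := by
    have : ε * (2 * c_p) < 1 := by
      have h2cp : 0 < 2 * c_p := by linarith
      calc ε * (2 * c_p) < (1 / (2 * c_p)) * (2 * c_p) := by
            exact mul_lt_mul_of_pos_right hε' h2cp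
        _ = 1 := by field_simp
    nlinarith
  have key : ∀ k, ‖θseq (k + 1) - θstar‖ ^ 2
      ≤ (1 - 2 * c_p * ε) * ‖θseq k - θstar‖ ^ 2 := by
    intro k
    set d := θseq k - θstar with hd
    set e : ℝ := ⟪ξ k, d⟫ with he
    have he' : ⟪ξ k, θseq k⟫ - ⟪ξ k, θstar⟫ = e := by
      rw [he, hd, inner_sub_right]
    set u := θseq k - η • ((⟪ξ k, θseq k⟫ - ⟪ξ k, θstar⟫) • ξ k) with hu
    have hproj : ‖θseq (k + 1) - θstar‖ ^ 2 ≤ ‖u - θstar‖ ^ 2 :=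
      proj_contract (hconv (k + 1)) (hmem k) (hθstar (k + 1)) (hupdate k)
    have hud : u - θstar = d - (η * e) • ξ k := by
      rw [hu, he', hd, smul_smul]; abel
    have hexp : ‖u - θstar‖ ^ 2
        = ‖d‖ ^ 2 - 2 * (η * e) * e + (η * e) ^ 2 * ‖ξ k‖ ^ 2 := by
      have hde : ⟪d, ξ k⟫ = e := by rw [he]; exact real_inner_comm (ξ k) d
      rw [hud, @norm_sub_sq_real, real_inner_smul_right, hde, norm_smul, Real.norm_eq_abs,
        mul_pow, sq_abs]
      ring
    have hpe' : c_p * ‖d‖ ^ 2 ≤ e ^ 2 := hpe k d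
    clear_value d e u
    by_cases hξ : ξ k = 0
    · have he0 : e = 0 := by simp [he, hξ]
      have hd0 : ‖d‖ ^ 2 = 0 := by
        have hz : c_p * ‖d‖ ^ 2 ≤ 0 := by simpa [he0] using hpe'
        nlinarith [sq_nonneg ‖d‖]
      have : ‖u - θstar‖ ^ 2 = 0 := by rw [hexp, he0, hd0]; ring
      have h1 : ‖θseq (k + 1) - θstar‖ ^ 2 ≤ 0 := this ▸ hproj
      nlinarith [sq_nonneg ‖θseq (k + 1) - θstar‖]
    · have hs : ‖ξ k‖ ^ 2 ≤ c_s := by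
        have := hstable k (ξ k)
        rw [real_inner_self_eq_norm_sq] at this
        have hξpos : 0 < ‖ξ k‖ ^ 2 := pow_pos (norm_pos_iff.mpr hξ) 2
        nlinarith
      have hA : (η * e) ^ 2 * ‖ξ k‖ ^ 2 ≤ (η * e) ^ 2 * c_s :=
        mul_le_mul_of_nonneg_left hs (sq_nonneg (η * e))
      have hB : 0 ≤ (η - η ^ 2 / 2 * c_s - ε) * (2 * e ^ 2) :=
        mul_nonneg (by linarith) (by positivity)
      have hC : 2 * ε * (c_p * ‖d‖ ^ 2) ≤ 2 * ε * e ^ 2 :=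
        mul_le_mul_of_nonneg_left hpe' (by linarith)
      have hbound : ‖u - θstar‖ ^ 2 ≤ (1 - 2 * c_p * ε) * ‖d‖ ^ 2 := by
        rw [hexp]; nlinarith [hA, hB, hC]
      linarith
    
  constructor
  · intro k; have := key k; linarith
  · intro K
    have hpow : ∀ K : ℕ, ‖θseq K - θstar‖ ^ 2
        ≤ (1 - 2 * c_p * ε) ^ K * ‖θseq 0 - θstar‖ ^ 2 := by
      intro K
      induction K with
      | zero => simp
      | succ n ih =>
        calc ‖θseq (n + 1) - θstar‖ ^ 2
            ≤ (1 - 2 * c_p * ε) * ‖θseq n - θstar‖ ^ 2 := key n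
          _ ≤ (1 - 2 * c_p * ε) * ((1 - 2 * c_p * ε) ^ n * ‖θseq 0 - θstar‖ ^ 2) :=
              mul_le_mul_of_nonneg_left ih hr0
          _ = (1 - 2 * c_p * ε) ^ (n + 1) * ‖θseq 0 - θstar‖ ^ 2 := by ring
    have hle : (1 - 2 * c_p * ε) ≤ Real.exp (-(2 * c_p * ε)) := by
      have := Real.add_one_le_exp (-(2 * c_p * ε))
      linarith
    have hpow2 : (1 - 2 * c_p * ε) ^ K ≤ Real.exp (-(2 * c_p * K * ε)) := by
      have h1 : (1 - 2 * c_p * ε) ^ K ≤ (Real.exp (-(2 * c_p * ε))) ^ K :=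
        pow_le_pow_left₀ hr0 hle K
      have h2 : (Real.exp (-(2 * c_p * ε))) ^ K = Real.exp (-(2 * c_p * K * ε)) := by
        rw [← Real.exp_nat_mul]; congr 1; ring
      linarith [h2 ▸ h1]
    calc ‖θseq K - θstar‖ ^ 2 ≤ (1 - 2 * c_p * ε) ^ K * ‖θseq 0 - θstar‖ ^ 2 := hpow K
      _ ≤ Real.exp (-(2 * c_p * K * ε)) * ‖θseq 0 - θstar‖ ^ 2 :=
          mul_le_mul_of_nonneg_right hpow2 (sq_nonneg _)
end
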